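/- arXiv:1708.05809 — 2 statements merged into one kernel-verified Lean document; each statement's English description precedes it below -/
import Mathlib

section
/- Let G be a connected bipartite signed graph on n vertices with bipartition V(G) = L ∪ R and let a ∈ ℤ^n. Then a lies in the subgroup of ℤ^n generated by {ρ(e) : e ∈ E(G)} if and only if Σ_{i∈L} a_i = Σ_{j∈R} a_j. -/
open scoped BigOperators

namespace EdgeRing

/-- A signed edge on vertex set `Fin n`: endpoints `e.1`, `e.2.1` and sign `e.2.2`. -/
abbrev SEdge (n : ℕ) := Fin n × Fin n × ℤ

/-- A signed graph on `n` vertices: a set of signed edges (loops allowed, `e.1 = e.2.1`). -/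
structure SGraph (n : ℕ) where
  E : Set (SEdge n)
  sgn_unit : ∀ e ∈ E, e.2.2 = 1 ∨ e.2.2 = -1

variable {n : ℕ}

/-- `ρ(±ij) = ±(e_i + e_j)` (a loop at `i` gives `±2 e_i`), integer version. -/
def rhoZ (e : SEdge n) : Fin n → ℤ :=
  fun v => e.2.2 * ((if e.1 = v then 1 else 0) + (if e.2.1 = v then 1 else 0))

/-- real version of `rhoZ`. -/
def rhoR (e : SEdge n) : Fin n → ℝ := fun v => (rhoZ e v : ℝ)

def toR (a : Fin n → ℤ) : Fin n → ℝ := fun v => (a v : ℝ)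

def SGraph.rhoZSet (G : SGraph n) : Set (Fin n → ℤ) := {x | ∃ e ∈ G.E, x = rhoZ e}

def SGraph.rhoRSet (G : SGraph n) : Set (Fin n → ℝ) := {x | ∃ e ∈ G.E, x = rhoR e}

/-- `ℤρ(E(G))`: the subgroup of `ℤ^n` generated by the edge vectors. -/
def SGraph.lattice (G : SGraph n) : AddSubgroup (Fin n → ℤ) :=
  AddSubgroup.closure G.rhoZSet

/-- `ℤ₊ρ(E(G))`: the affine semigroup generated by the edge vectors. -/
def SGraph.sgp (G : SGraph n) : AddSubmonoid (Fin n → ℤ) :=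
  AddSubmonoid.closure G.rhoZSet

/-- adjacency via an edge of `G` (symmetric by definition). -/
def SGraph.adj (G : SGraph n) (i j : Fin n) : Prop :=
  ∃ e ∈ G.E, (e.1 = i ∧ e.2.1 = j) ∨ (e.1 = j ∧ e.2.1 = i)

/-- `G` is connected: any two vertices are joined by a walk. -/
def SGraph.Connected (G : SGraph n) : Prop :=
  ∀ i j : Fin n, Relation.ReflTransGen G.adj i j

/-- the vertex set of the connected component of `v`. -/
def SGraph.compSet (G : SGraph n) (v : Fin n) : Set (Fin n) :=
  {w | Relation.ReflTransGen G.adj v w}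

/-- `C` is (the vertex set of) a component of `G`. -/
def SGraph.IsComp (G : SGraph n) (C : Set (Fin n)) : Prop :=
  ∃ v, C = G.compSet v

/-- the edge `e` is incident to the vertex set `S`. -/
def incident (e : SEdge n) (S : Set (Fin n)) : Prop := e.1 ∈ S ∨ e.2.1 ∈ S

/-- the vertex set `C` is partitioned as `L ∪ R` and every edge of `G` incident to `C`
has one endpoint in `L` and one in `R`. -/
def SGraph.BipWith (G : SGraph n) (C L R : Set (Fin n)) : Prop :=
  C = L ∪ R ∧ Disjoint L R ∧
    ∀ e ∈ G.E, incident e C → ((e.1 ∈ L ∧ e.2.1 ∈ R) ∨ (e.1 ∈ R ∧ e.2.1 ∈ L))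

/-- the vertex set `C` (e.g. a component) is bipartite in `G`. -/
def SGraph.BipOn (G : SGraph n) (C : Set (Fin n)) : Prop := ∃ L R, G.BipWith C L R

/-- `L ∪ R` is a bipartition of (all of) `G`. -/
def SGraph.IsBipartition (G : SGraph n) (L R : Set (Fin n)) : Prop :=
  G.BipWith Set.univ L R

def SGraph.Bipartite (G : SGraph n) : Prop := ∃ L R, G.IsBipartition L R

/-- `comp G`: the number of connected components of `G`. -/
noncomputable def SGraph.comp (G : SGraph n) : ℕ := Nat.card {C : Set (Fin n) // G.IsComp C}

/-- `bicomp G`: the number of bipartite connected components of `G`. -/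
noncomputable def SGraph.bicomp (G : SGraph n) : ℕ :=
  Nat.card {C : Set (Fin n) // G.IsComp C ∧ G.BipOn C}

/-- the dual vector `e_L^* - e_R^*` as an element of `ℝ^n`. -/
noncomputable def dvec (L R : Set (Fin n)) : Fin n → ℝ :=
  fun v => Set.indicator L (fun _ => (1 : ℝ)) v - Set.indicator R (fun _ => (1 : ℝ)) v

/-- `L, R` witness the facet-subgraph condition for the bipartite component `C` of `H`:
`C = L ∪ R` is a bipartition, and every edge of `G` not in `H` is a positive edge
incident to `L` but not `R`, or a negative edge incident to `R` but not `L`. -/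
def FacetWitness (G H : SGraph n) (C L R : Set (Fin n)) : Prop :=
  H.BipWith C L R ∧
    ∀ e ∈ G.E \ H.E,
      (e.2.2 = 1 ∧ incident e L ∧ ¬ incident e R) ∨
      (e.2.2 = -1 ∧ incident e R ∧ ¬ incident e L)

/-- `H` is a facet subgraph of `G`. -/
def IsFacetSubgraph (G H : SGraph n) : Prop :=
  H.E ⊆ G.E ∧ H.bicomp = G.bicomp + 1 ∧
    ∀ C, H.IsComp C → H.BipOn C → ¬ G.IsComp C → ∃ L R, FacetWitness G H C L R

/-- the cone generated by `S`: all nonnegative real combinations. -/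
def coneOf (S : Set (Fin n → ℝ)) : Set (Fin n → ℝ) :=
  {x | ∃ (t : Finset (Fin n → ℝ)) (c : (Fin n → ℝ) → ℝ),
    ↑t ⊆ S ∧ (∀ y, 0 ≤ c y) ∧ x = ∑ y ∈ t, c y • y}

/-- the dimension of a subset of `ℝ^n`: dimension of its linear span. -/
noncomputable def sdim (S : Set (Fin n → ℝ)) : ℕ := Module.finrank ℝ (Submodule.span ℝ S)

/-- `F` is a face of the cone `C`, cut out by a supporting linear form. -/
def IsFaceOf (C F : Set (Fin n → ℝ)) : Prop :=
  ∃ σ : (Fin n → ℝ) →ₗ[ℝ] ℝ, (∀ x ∈ C, 0 ≤ σ x) ∧ F = C ∩ {x | σ x = 0}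

/-- `F` is a facet of the cone `C`: a proper face of dimension `dim C - 1`. -/
def IsFacetOf (C F : Set (Fin n → ℝ)) : Prop :=
  IsFaceOf C F ∧ F ≠ C ∧ sdim F + 1 = sdim C

/-- the subgraph of `G` consisting of the edges inside the vertex set `C`. -/
def SGraph.restrict (G : SGraph n) (C : Set (Fin n)) : SGraph n :=
  ⟨{e ∈ G.E | e.1 ∈ C}, fun e he => G.sgn_unit e he.1⟩

/-- Vitulli's criterion for Serre's `R₁` condition for the edge ring `k[G]`
(taken here as the definition of `R₁`). -/
def SerreR1 (G : SGraph n) : Prop :=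
  ∀ F, IsFacetOf (coneOf G.rhoRSet) F →
    ∃ σ : (Fin n → ℝ) →ₗ[ℝ] ℝ,
      (∀ x ∈ coneOf G.rhoRSet, 0 ≤ σ x) ∧
      F = coneOf G.rhoRSet ∩ {x | σ x = 0} ∧
      (∀ a ∈ G.lattice, ∃ z : ℤ, σ (toR a) = z) ∧
      (∃ a ∈ G.sgp, σ (toR a) = 1) ∧
      ((AddSubgroup.closure {a : Fin n → ℤ | a ∈ G.sgp ∧ toR a ∈ F} : AddSubgroup (Fin n → ℤ)) :
          Set (Fin n → ℤ)) = {a : Fin n → ℤ | a ∈ G.lattice ∧ σ (toR a) = 0}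

/-! ### Mixed signed, directed graphs -/

/-- A mixed signed, directed graph: signed edges `SE` (loops allowed) and
directed edges `DE` (no directed loops). -/
structure MGraph (n : ℕ) where
  SE : Set (SEdge n)
  DE : Set (Fin n × Fin n)
  sgn_unit : ∀ e ∈ SE, e.2.2 = 1 ∨ e.2.2 = -1
  no_dloop : ∀ e ∈ DE, e.1 ≠ e.2

/-- `ρ((i,j)) = e_j - e_i` for a directed edge. -/
def rhoD (e : Fin n × Fin n) : Fin n → ℤ :=
  fun v => (if e.2 = v then 1 else 0) - (if e.1 = v then 1 else 0)

def MGraph.rhoZSet (G : MGraph n) : Set (Fin n → ℤ) :=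
  {x | ∃ e ∈ G.SE, x = rhoZ e} ∪ {x | ∃ e ∈ G.DE, x = rhoD e}

def MGraph.rhoRSet (G : MGraph n) : Set (Fin n → ℝ) :=
  {x | ∃ a ∈ G.rhoZSet, x = toR a}

/-- `ℤρ(E(G))` for a mixed signed, directed graph. -/
def MGraph.lattice (G : MGraph n) : AddSubgroup (Fin n → ℤ) :=
  AddSubgroup.closure G.rhoZSet

def MGraph.adj (G : MGraph n) (i j : Fin n) : Prop :=
  (∃ e ∈ G.SE, (e.1 = i ∧ e.2.1 = j) ∨ (e.1 = j ∧ e.2.1 = i)) ∨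
  (∃ e ∈ G.DE, (e.1 = i ∧ e.2 = j) ∨ (e.1 = j ∧ e.2 = i))

def MGraph.Connected (G : MGraph n) : Prop :=
  ∀ i j : Fin n, Relation.ReflTransGen G.adj i j

def MGraph.compSet (G : MGraph n) (v : Fin n) : Set (Fin n) :=
  {w | Relation.ReflTransGen G.adj v w}

def MGraph.IsComp (G : MGraph n) (C : Set (Fin n)) : Prop :=
  ∃ v, C = G.compSet v

noncomputable def MGraph.comp (G : MGraph n) : ℕ := Nat.card {C : Set (Fin n) // G.IsComp C}

/-- the directed edge `e` is incident to the vertex set `S`. -/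
def dincident (e : Fin n × Fin n) (S : Set (Fin n)) : Prop := e.1 ∈ S ∨ e.2 ∈ S

/-- Bipartiteness of the augmented signed graph of `G` on the vertex set `C`,
expressed on `G` itself: `C = L ∪ R`, every signed edge incident to `C` crosses
between `L` and `R`, and every directed edge incident to `C` has both endpoints
in the same part (its artificial vertex lies on the other side). -/
def MGraph.BipWith (G : MGraph n) (C L R : Set (Fin n)) : Prop :=
  C = L ∪ R ∧ Disjoint L R ∧
    (∀ e ∈ G.SE, incident e C → ((e.1 ∈ L ∧ e.2.1 ∈ R) ∨ (e.1 ∈ R ∧ e.2.1 ∈ L))) ∧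
    (∀ e ∈ G.DE, dincident e C → ((e.1 ∈ L ∧ e.2 ∈ L) ∨ (e.1 ∈ R ∧ e.2 ∈ R)))

def MGraph.BipOn (G : MGraph n) (C : Set (Fin n)) : Prop := ∃ L R, G.BipWith C L R

def MGraph.IsBipartition (G : MGraph n) (L R : Set (Fin n)) : Prop :=
  G.BipWith Set.univ L R

def MGraph.Bipartite (G : MGraph n) : Prop := ∃ L R, G.IsBipartition L R

/-- number of components of `G` whose augmentation is bipartite. -/
noncomputable def MGraph.bicomp (G : MGraph n) : ℕ :=
  Nat.card {C : Set (Fin n) // G.IsComp C ∧ G.BipOn C}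

/-- facet-subgraph witness for mixed signed, directed graphs. -/
def MFacetWitness (G H : MGraph n) (C L R : Set (Fin n)) : Prop :=
  H.BipWith C L R ∧
    (∀ e ∈ G.SE \ H.SE,
      (e.2.2 = 1 ∧ incident e L ∧ ¬ incident e R) ∨
      (e.2.2 = -1 ∧ incident e R ∧ ¬ incident e L)) ∧
    (∀ e ∈ G.DE \ H.DE, (e.2 ∈ L ∧ e.1 ∉ L) ∨ (e.1 ∈ R ∧ e.2 ∉ R))

/-- `H` is a facet subgraph of the mixed signed, directed graph `G`. -/
def IsMFacetSubgraph (G H : MGraph n) : Prop :=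
  H.SE ⊆ G.SE ∧ H.DE ⊆ G.DE ∧ H.bicomp = G.bicomp + 1 ∧
    ∀ C, H.IsComp C → H.BipOn C → ¬ G.IsComp C → ∃ L R, MFacetWitness G H C L R


/-! The form `a ↦ ∑_L a - ∑_R a` is the dot product with the sign vector `s = 𝟙_L - 𝟙_R`, which
kills every `ρ(e)` because each edge joins `L` to `R`. Conversely, along a walk from `i` to `j`
the edge vectors `e_b + e_c` telescope, with alternating signs, to `s_j e_i - s_i e_j`; by
connectivity these lie in `ℤρ(E(G))` for a fixed `j = v₀`, and every `a` with `s ⬝ᵥ a = 0` is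
an integer combination of them. -/

section SignedSums

variable {ι : Type*}

noncomputable def sideSign (L R : Set ι) : ι → ℤ := L.indicator 1 - R.indicator 1

lemma sideSign_of_mem_left {L R : Set ι} (hLR : Disjoint L R) {v : ι} (hv : v ∈ L) :
    sideSign L R v = 1 := by
  simp [sideSign, hv, Set.disjoint_left.1 hLR hv]

lemma sideSign_of_mem_right {L R : Set ι} (hLR : Disjoint L R) {v : ι} (hv : v ∈ R) :
    sideSign L R v = -1 := by
  simp [sideSign, hv, Set.disjoint_right.1 hLR hv]

lemma sideSign_mul_self {L R : Set ι} (hLR : Disjoint L R) {v : ι} (hv : v ∈ L ∪ R) :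
    sideSign L R v * sideSign L R v = 1 := by
  rcases hv with hv | hv
  · simp [sideSign_of_mem_left hLR hv]
  · simp [sideSign_of_mem_right hLR hv]

lemma sideSign_dotProduct [Fintype ι] (L R : Set ι) (a : ι → ℤ) :
    sideSign L R ⬝ᵥ a = ∑ i, L.indicator a i - ∑ i, R.indicator a i := by
  have one_mul_eq (S : Set ι) (i : ι) : S.indicator 1 i * a i = S.indicator a i := by
    by_cases hi : i ∈ S <;> simp [hi]
  simp [dotProduct, sideSign, sub_mul, one_mul_eq]

end SignedSums

section Lattice

variable {ι : Type*} [DecidableEq ι] {H : AddSubgroup (ι → ℤ)} {s : ι → ℤ}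

lemma single_sub_single_mem_of_reflTransGen {r : ι → ι → Prop}
    (hrH : ∀ ⦃i j⦄, r i j → Pi.single i 1 + Pi.single j 1 ∈ H)
    (hrs : ∀ ⦃i j⦄, r i j → s j = -s i) {i j : ι} (hij : Relation.ReflTransGen r i j) :
    Pi.single i (s j) - Pi.single j (s i) ∈ H := by
  induction hij with
  | refl => simp
  | @tail b c _ hbc ih =>
    have key : Pi.single i (s c) - Pi.single c (s i) =
        -(Pi.single i (s b) - Pi.single b (s i) : ι → ℤ) -
          s i • (Pi.single b 1 + Pi.single c 1) := by
      rw [hrs hbc]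
      ext
      simp only [Pi.sub_apply, Pi.neg_apply, Pi.smul_apply, Pi.add_apply, Pi.single_apply]
      split_ifs <;> ring
    rw [key]
    exact sub_mem (neg_mem ih) (zsmul_mem (hrH hbc) _)

lemma mem_of_dotProduct_eq_zero [Fintype ι] {v₀ : ι} (hv₀ : s v₀ * s v₀ = 1)
    (hH : ∀ v, Pi.single v (s v₀) - Pi.single v₀ (s v) ∈ H) {a : ι → ℤ} (ha : s ⬝ᵥ a = 0) :
    a ∈ H := by
  have key : a = ∑ v, (s v₀ * a v) • (Pi.single v (s v₀) - Pi.single v₀ (s v)) := by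
    have hsum : ∑ v, s v₀ * a v * s v = 0 := by
      simp only [mul_assoc, ← Finset.mul_sum]
      rw [← dotProduct, dotProduct_comm, ha, mul_zero]
    ext w
    simp [Finset.sum_apply, Pi.single_apply, mul_sub, Finset.sum_sub_distrib, hsum]
    linear_combination (-a w) * hv₀
  rw [key]
  exact sum_mem fun v _ => zsmul_mem (hH v) _

end Lattice

section SignedGraph

variable {n : ℕ} {G : SGraph n}

lemma rhoZ_eq_smul (e : SEdge n) : rhoZ e = e.2.2 • (Pi.single e.1 1 + Pi.single e.2.1 1) := by
  ext v
  simp [rhoZ, Pi.single_apply, eq_comm]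

lemma SGraph.single_add_single_mem_lattice {e : SEdge n} (he : e ∈ G.E) :
    Pi.single e.1 1 + Pi.single e.2.1 1 ∈ G.lattice := by
  have hρ : rhoZ e ∈ G.lattice := AddSubgroup.subset_closure ⟨e, he, rfl⟩
  rw [rhoZ_eq_smul] at hρ
  rcases G.sgn_unit e he with h | h <;> rw [h] at hρ
  · simpa using hρ
  · simpa [add_comm] using neg_mem hρ

lemma SGraph.single_add_single_mem_lattice_of_adj {i j : Fin n} (h : G.adj i j) :
    Pi.single i 1 + Pi.single j 1 ∈ G.lattice := by
  obtain ⟨e, he, ⟨rfl, rfl⟩ | ⟨rfl, rfl⟩⟩ := h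
  · exact G.single_add_single_mem_lattice he
  · rw [add_comm]
    exact G.single_add_single_mem_lattice he

namespace SGraph.IsBipartition

variable {L R : Set (Fin n)}

lemma sideSign_add_eq_zero (hbip : G.IsBipartition L R) {e : SEdge n} (he : e ∈ G.E) :
    sideSign L R e.1 + sideSign L R e.2.1 = 0 := by
  obtain ⟨-, hLR, hE⟩ := hbip
  rcases hE e he (Or.inl trivial) with ⟨h1, h2⟩ | ⟨h1, h2⟩
  · simp [sideSign_of_mem_left hLR h1, sideSign_of_mem_right hLR h2]
  · simp [sideSign_of_mem_right hLR h1, sideSign_of_mem_left hLR h2]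

lemma sideSign_eq_neg_of_adj (hbip : G.IsBipartition L R) {i j : Fin n} (h : G.adj i j) :
    sideSign L R j = -sideSign L R i := by
  obtain ⟨e, he, ⟨rfl, rfl⟩ | ⟨rfl, rfl⟩⟩ := h <;> linarith [hbip.sideSign_add_eq_zero he]

lemma sideSign_dotProduct_eq_zero (hbip : G.IsBipartition L R) {a : Fin n → ℤ}
    (ha : a ∈ G.lattice) : sideSign L R ⬝ᵥ a = 0 := by
  induction ha using AddSubgroup.closure_induction with
  | mem _ hx =>
    obtain ⟨e, he, rfl⟩ := hx
    rw [rhoZ_eq_smul, dotProduct_smul, dotProduct_add, dotProduct_single_one,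
      dotProduct_single_one, hbip.sideSign_add_eq_zero he, smul_zero]
  | zero => exact dotProduct_zero _
  | add _ _ _ _ hx hy => rw [dotProduct_add, hx, hy, add_zero]
  | neg _ _ hx => rw [dotProduct_neg, hx, neg_zero]

lemma mem_lattice_of_sideSign_dotProduct_eq_zero (hbip : G.IsBipartition L R)
    (hconn : G.Connected) {a : Fin n → ℤ} (ha : sideSign L R ⬝ᵥ a = 0) : a ∈ G.lattice := by
  rcases isEmpty_or_nonempty (Fin n) with _ | ⟨⟨v₀⟩⟩
  · rw [Subsingleton.elim a 0]
    exact zero_mem _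
  refine mem_of_dotProduct_eq_zero (sideSign_mul_self hbip.2.1 (hbip.1 ▸ Set.mem_univ v₀))
    (fun v => ?_) ha
  exact single_sub_single_mem_of_reflTransGen
    (fun _ _ => SGraph.single_add_single_mem_lattice_of_adj)
    (fun _ _ => hbip.sideSign_eq_neg_of_adj) (hconn v v₀)

end SGraph.IsBipartition

end SignedGraph

/-- for a connected bipartite signed graph with bipartition `L ∪ R`,
`a ∈ ℤρ(E(G))` iff the coordinate sums of `a` over `L` and over `R` agree. -/
theorem stmt4 {n : ℕ} (G : SGraph n) (hconn : G.Connected) (L R : Set (Fin n))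
    (hbip : G.IsBipartition L R) (a : Fin n → ℤ) :
    a ∈ G.lattice ↔ ∑ i, L.indicator a i = ∑ i, R.indicator a i := by
  rw [← sub_eq_zero, ← sideSign_dotProduct]
  exact ⟨hbip.sideSign_dotProduct_eq_zero, hbip.mem_lattice_of_sideSign_dotProduct_eq_zero hconn⟩

end EdgeRing
end

section
/- Let G be a connected non-bipartite signed graph and let i, j be any two vertices of G. Then both e_i + e_j and e_i − e_j lie in the subgroup of ℤ^n generated by {ρ(e) : e ∈ E(G)}. -/
open scoped BigOperators

namespace EdgeRing

variable {n : ℕ}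

/-!
Modulo the lattice `Λ = ℤρ(E(G))`, write `[v]` for the class of `e_v`. An edge `uv` gives
`[v] = -[u]`, so along walks `[v] = ±[u]`. If `[i] = -[i]`, connectivity makes every class equal
to `[i] = -[i]`, which is the claim. Otherwise the vertices with `[v] = [i]` and those with
`[v] = -[i]` form a bipartition of `G`.
-/

theorem eq_or_eq_neg_of_reflTransGen {V Q : Type*} [AddCommGroup Q] {r : V → V → Prop}
    {y : V → Q} (hr : ∀ a b, r a b → y b = -y a) {a b : V}
    (h : Relation.ReflTransGen r a b) : y b = y a ∨ y b = -y a := by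
  induction h with
  | refl => exact Or.inl rfl
  | tail _ hcd ih =>
    rw [hr _ _ hcd]
    rcases ih with h | h <;> simp [h]

namespace SGraph

def vertexClass (G : SGraph n) (v : Fin n) : (Fin n → ℤ) ⧸ G.lattice :=
  QuotientAddGroup.mk (Pi.single v 1)

theorem vertexClass_eq_iff (G : SGraph n) (a b : Fin n) :
    G.vertexClass a = G.vertexClass b ↔ (Pi.single a 1 - Pi.single b 1 : Fin n → ℤ) ∈ G.lattice :=
  QuotientAddGroup.eq_iff_sub_mem

theorem vertexClass_eq_neg_iff (G : SGraph n) (a b : Fin n) :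
    G.vertexClass b = -G.vertexClass a ↔
      (Pi.single a 1 + Pi.single b 1 : Fin n → ℤ) ∈ G.lattice := by
  rw [eq_neg_iff_add_eq_zero, add_comm, vertexClass, vertexClass, ← QuotientAddGroup.mk_add,
    QuotientAddGroup.eq_zero_iff]

theorem single_add_single_mem_lattice_s5 (G : SGraph n) {e : SEdge n} (he : e ∈ G.E) :
    (Pi.single e.1 1 + Pi.single e.2.1 1 : Fin n → ℤ) ∈ G.lattice := by
  have hρ : rhoZ e ∈ G.lattice := AddSubgroup.subset_closure ⟨e, he, rfl⟩
  have hρ_eq : rhoZ e = e.2.2 • (Pi.single e.1 1 + Pi.single e.2.1 1 : Fin n → ℤ) := by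
    funext v
    simp [rhoZ, Pi.single_apply, eq_comm]
  rcases G.sgn_unit e he with h | h
  · rwa [hρ_eq, h, one_smul] at hρ
  · rwa [hρ_eq, h, neg_smul, one_smul, neg_mem_iff] at hρ

theorem vertexClass_eq_neg_of_adj (G : SGraph n) {a b : Fin n} (h : G.adj a b) :
    G.vertexClass b = -G.vertexClass a := by
  obtain ⟨e, he, ⟨rfl, rfl⟩ | ⟨rfl, rfl⟩⟩ := h
  · exact (G.vertexClass_eq_neg_iff _ _).2 (G.single_add_single_mem_lattice_s5 he)
  · rw [eq_neg_iff_add_eq_zero, add_comm, ← eq_neg_iff_add_eq_zero]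
    exact (G.vertexClass_eq_neg_iff _ _).2 (G.single_add_single_mem_lattice_s5 he)

theorem vertexClass_eq_or_eq_neg {G : SGraph n} (hconn : G.Connected) (a b : Fin n) :
    G.vertexClass b = G.vertexClass a ∨ G.vertexClass b = -G.vertexClass a :=
  eq_or_eq_neg_of_reflTransGen (y := G.vertexClass) (fun _ _ => G.vertexClass_eq_neg_of_adj)
    (hconn a b)

theorem bipartite_of_vertexClass_ne_neg {G : SGraph n} (hconn : G.Connected) (i : Fin n)
    (hi : G.vertexClass i ≠ -G.vertexClass i) : G.Bipartite := by
  set L := {v | G.vertexClass v = G.vertexClass i}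
  refine ⟨L, Lᶜ, (Set.union_compl_self L).symm, disjoint_compl_right, fun e he _ => ?_⟩
  have hedge := G.vertexClass_eq_neg_of_adj ⟨e, he, Or.inl ⟨rfl, rfl⟩⟩
  rcases vertexClass_eq_or_eq_neg hconn i e.1 with h | h
  · exact Or.inl ⟨h, fun h' => hi (h'.symm.trans (h ▸ hedge))⟩
  · refine Or.inr ⟨fun h' => hi (h ▸ h'.symm), ?_⟩
    show G.vertexClass e.2.1 = G.vertexClass i
    rw [hedge, h, neg_neg]

end SGraph

/-- in a connected non-bipartite signed graph, both `e_i + e_j` and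
`e_i - e_j` lie in `ℤρ(E(G))` for any vertices `i, j`. -/
theorem stmt5 {n : ℕ} (G : SGraph n) (hconn : G.Connected) (hnb : ¬ G.Bipartite)
    (i j : Fin n) :
    (Pi.single i 1 + Pi.single j 1 : Fin n → ℤ) ∈ G.lattice ∧
      (Pi.single i 1 - Pi.single j 1 : Fin n → ℤ) ∈ G.lattice := by
  rw [← G.vertexClass_eq_neg_iff, ← G.vertexClass_eq_iff]
  have hi : G.vertexClass i = -G.vertexClass i := by
    by_contra hne
    exact hnb (SGraph.bipartite_of_vertexClass_ne_neg hconn i hne)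
  rcases SGraph.vertexClass_eq_or_eq_neg hconn i j with hj | hj
  · exact ⟨hj.trans hi, hj.symm⟩
  · exact ⟨hj, (hj.trans hi.symm).symm⟩

end EdgeRing
end
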